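/- Let L be a lamination system on S^1 and G, G' two gaps each with at least 2 elements. Then either G = G', or there exist I ∈ G and I' ∈ G' with I* ⊆ I' such that every leaf ℓ(J) with J ∈ G lies on I', and every leaf ℓ(J') with J' ∈ G' lies on I. -/

import Mathlib

open Set Topology

noncomputable section

/-- Stereographic projection from `1 ∈ S¹`. -/
def sproj (z : Circle) : ℝ := (z : ℂ).im / ((z : ℂ).re - 1)

/-- `(a,b,c)` is a positively oriented triple on `S¹`. -/
def posOri (a b c : Circle) : Prop :=
  a ≠ b ∧ b ≠ c ∧ c ≠ a ∧ sproj (a⁻¹ * b) < sproj (a⁻¹ * c)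

/-- The nondegenerate open interval `(u,v)` on `S¹`. -/
def oInt (u v : Circle) : Set Circle := {p | posOri u p v}

/-- `I` is a nondegenerate open interval on `S¹`. -/
def IsND (I : Set Circle) : Prop := ∃ u v : Circle, u ≠ v ∧ I = oInt u v

/-- The dual interval `I* = (v,u)` of `I = (u,v)`, i.e. the interior of the complement. -/
def dual (I : Set Circle) : Set Circle := interior Iᶜ

/-- The leaf `{I, I*}` lies on `J`. -/
def LiesOn (I J : Set Circle) : Prop := I ⊆ J ∨ dual I ⊆ J

/-- A lamination system on `S¹`. -/
structure LamSys (L : Set (Set Circle)) : Prop where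
  nonempty : L.Nonempty
  nd : ∀ I ∈ L, IsND I
  dualMem : ∀ I ∈ L, dual I ∈ L
  unlinked : ∀ I ∈ L, ∀ J ∈ L, LiesOn I J ∨ LiesOn I (dual J)
  chainUnion : ∀ f : ℕ → Set Circle, (∀ n, f n ∈ L) → (∀ n, f n ⊆ f (n + 1)) →
    IsND (⋃ n, f n) → (⋃ n, f n) ∈ L

/-- The leaf associated to an interval. -/
def leafOf (I : Set Circle) : Set (Set Circle) := {I, dual I}

/-- `liminf` of a sequence of sets. -/
def sLiminf (f : ℕ → Set Circle) : Set Circle := ⋃ k, ⋂ n, ⋂ (_ : k ≤ n), f n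

/-- `limsup` of a sequence of sets. -/
def sLimsup (f : ℕ → Set Circle) : Set Circle := ⋂ k, ⋃ n, ⋃ (_ : k ≤ n), f n

/-- The sequence of intervals converges to `J`. -/
def ConvTo (f : ℕ → Set Circle) (J : Set Circle) : Prop :=
  J ⊆ sLiminf f ∧ sLiminf f ⊆ sLimsup f ∧ sLimsup f ⊆ closure J

/-- A gap of a lamination system. -/
def IsGap (L G : Set (Set Circle)) : Prop :=
  G ⊆ L ∧ (∀ I ∈ G, ∀ J ∈ G, I ≠ J → I ∩ J = ∅) ∧ ∀ I ∈ L, ∃ J ∈ G, LiesOn I J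

/-- A gap which is a leaf. -/
def IsLeafGap (G : Set (Set Circle)) : Prop := ∃ I, G = leafOf I

/-- The vertex (endpoint) set of a gap. -/
def vset (G : Set (Set Circle)) : Set Circle := (⋃₀ G)ᶜ

/-- A very full lamination system: every gap is an ideal polygon (finite vertex set). -/
def VeryFull (L : Set (Set Circle)) : Prop := ∀ G, IsGap L G → (vset G).Finite

/-- The set of endpoints of leaves of `L`. -/
def ELset (L : Set (Set Circle)) : Set Circle := ⋃ I ∈ L, frontier I

/-- A rainbow at `p`. -/
def Rainbow (L : Set (Set Circle)) (p : Circle) (f : ℕ → Set Circle) : Prop :=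
  (∀ n, f n ∈ L) ∧ (∀ n, f (n + 1) ⊆ f n) ∧ (⋂ n, f n) = {p}

/-- An `I`-side sequence of leaves. -/
def SideSeq (L : Set (Set Circle)) (I : Set Circle) (f : ℕ → Set Circle) : Prop :=
  (∀ n, f n ∈ L) ∧ (∀ n, I ∉ leafOf (f n)) ∧ (∀ n, LiesOn (f n) I) ∧ ConvTo f I

/-- `I` is isolated in `L`. -/
def IsolatedInt (L : Set (Set Circle)) (I : Set Circle) : Prop := ∀ f, ¬ SideSeq L I f

/-- `C_p^I`. -/
def Cset (L : Set (Set Circle)) (p : Circle) (I : Set Circle) : Set (Set Circle) :=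
  {J ∈ L | p ∈ J ∧ J ⊆ I}

/-- The group of self-homeomorphisms of the circle (composition as multiplication). -/
instance : Group (Circle ≃ₜ Circle) where
  mul g h := h.trans g
  one := Homeomorph.refl _
  inv := Homeomorph.symm
  mul_assoc _ _ _ := Homeomorph.ext fun _ => rfl
  one_mul _ := Homeomorph.ext fun _ => rfl
  mul_one _ := Homeomorph.ext fun _ => rfl
  inv_mul_cancel g := Homeomorph.ext fun x => g.symm_apply_apply x

/-- An orientation-preserving homeomorphism of the circle. -/
def OrientPres (g : Circle ≃ₜ Circle) : Prop :=
  ∀ a b c, posOri a b c → posOri (g a) (g b) (g c)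

/-- `L` is invariant under a subgroup `G` of homeomorphisms. -/
def GInv (G : Subgroup (Circle ≃ₜ Circle)) (L : Set (Set Circle)) : Prop :=
  ∀ g ∈ G, ∀ I ∈ L, (⇑g) '' I ∈ L

/-- The image of a gap under a homeomorphism. -/
def gapIm (g : Circle ≃ₜ Circle) (P : Set (Set Circle)) : Set (Set Circle) :=
  (fun I => (⇑g) '' I) '' P

/-- `v_G(P)`, the union of the vertex sets of the `G`-orbit of the gap `P`. -/
def vOrb (G : Subgroup (Circle ≃ₜ Circle)) (P : Set (Set Circle)) : Set Circle :=
  ⋃ g ∈ G, vset (gapIm g P)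

/-- A loose lamination system: distinct non-leaf gaps have disjoint vertex sets. -/
def Loose (L : Set (Set Circle)) : Prop :=
  ∀ P Q, IsGap L P → IsGap L Q → ¬ IsLeafGap P → ¬ IsLeafGap Q → P ≠ Q →
    vset P ∩ vset Q = ∅

/-- A pseudo-fibered triple `(L₁, L₂, G)`. -/
structure PFib (L₁ L₂ : Set (Set Circle)) (G : Subgroup (Circle ≃ₜ Circle)) : Prop where
  orient : ∀ g ∈ G, OrientPres g
  fg : G.FG
  lam₁ : LamSys L₁
  lam₂ : LamSys L₂
  inv₁ : GInv G L₁
  inv₂ : GInv G L₂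
  veryFull₁ : VeryFull L₁
  veryFull₂ : VeryFull L₂
  loose₁ : Loose L₁
  loose₂ : Loose L₂
  disjEnds : ELset L₁ ∩ ELset L₂ = ∅

end

/-! Every nondegenerate interval is the interior of its closure (checked in the stereographic
chart `p ↦ sproj (u⁻¹ * p)`, which sends `(u, v)` onto a half-line), so `I** = I` and the
relation `I* ⊆ I'` is symmetric in `I` and `I'`. If some `I ∈ G`, `I' ∈ G'` satisfy it, then
every other element of `G` is disjoint from `I`, hence inside `I* ⊆ I'`, and symmetrically.
If no pair does, the leaf of `I ∈ G` lies on some `I' ∈ G'` only through `I ⊆ I'`, and `I'`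
lies on some `J ∈ G` only through `I' ⊆ J`; the elements of `G` being pairwise disjoint,
`I = J = I'`. Hence `G ⊆ G'`, and `G' ⊆ G` in the same way. -/

open Complex Filter ComplexConjugate

noncomputable section

lemma ofReal_add_I_ne_zero (t : ℝ) : (t : ℂ) + I ≠ 0 := fun h => by
  simpa using congrArg im h

def sprojInv (t : ℝ) : Circle :=
  Circle.ofConjDivSelf (t + I) (ofReal_add_I_ne_zero t)

lemma coe_sprojInv (t : ℝ) : (sprojInv t : ℂ) = conj ((t : ℂ) + I) / (t + I) := rfl

lemma sprojInv_re (t : ℝ) : (sprojInv t : ℂ).re = (t ^ 2 - 1) / (t ^ 2 + 1) := by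
  rw [coe_sprojInv, div_re, normSq_apply, map_add, conj_ofReal, conj_I]
  simp only [add_re, add_im, neg_re, neg_im, ofReal_re, ofReal_im, I_re, I_im]
  field_simp
  ring

lemma sprojInv_im (t : ℝ) : (sprojInv t : ℂ).im = -2 * t / (t ^ 2 + 1) := by
  rw [coe_sprojInv, div_im, normSq_apply, map_add, conj_ofReal, conj_I]
  simp only [add_re, add_im, neg_re, neg_im, ofReal_re, ofReal_im, I_re, I_im]
  field_simp
  ring

lemma continuous_sprojInv : Continuous sprojInv := by
  refine Continuous.subtype_mk ?_ _
  exact Continuous.div (by fun_prop) (by fun_prop) ofReal_add_I_ne_zero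

lemma tendsto_sprojInv_atTop : Tendsto sprojInv atTop (𝓝 1) := by
  have hw : Tendsto (fun t : ℝ => (t : ℂ) + I) atTop (Bornology.cobounded ℂ) :=
    (tendsto_add_const_cobounded I).comp (RCLike.tendsto_ofReal_atTop_cobounded ℂ)
  have hlim : Tendsto (fun w : ℂ => 1 - 2 * I * w⁻¹) (Bornology.cobounded ℂ) (𝓝 1) := by
    simpa using (tendsto_inv₀_cobounded.const_mul (2 * I)).const_sub 1
  refine Topology.IsEmbedding.subtypeVal.tendsto_nhds_iff.2 ((hlim.comp hw).congr fun t => ?_)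
  have ht := ofReal_add_I_ne_zero t
  simp only [Function.comp_apply]
  show _ = conj ((t : ℂ) + I) / (t + I)
  rw [map_add, conj_ofReal, conj_I]
  field_simp
  ring

lemma Circle.re_sq_add_im_sq (z : Circle) : (z : ℂ).re ^ 2 + (z : ℂ).im ^ 2 = 1 := by
  simpa [Complex.normSq_apply, sq] using Circle.normSq_coe z

lemma Circle.re_sub_one_ne_zero {z : Circle} (hz : z ≠ 1) : (z : ℂ).re - 1 ≠ 0 := by
  intro h
  have hre : (z : ℂ).re = 1 := by linarith
  have him : (z : ℂ).im = 0 := by nlinarith [Circle.re_sq_add_im_sq z]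
  exact hz (Circle.ext (Complex.ext (by simp [hre]) (by simp [him])))

lemma sprojInv_ne_one (t : ℝ) : sprojInv t ≠ 1 := by
  intro h
  have h1 := congrArg (fun z : Circle => (z : ℂ).re) h
  simp only [sprojInv_re, Circle.coe_one, one_re] at h1
  field_simp at h1
  linarith

lemma sproj_sprojInv (t : ℝ) : sproj (sprojInv t) = t := by
  have ht : t ^ 2 + 1 ≠ 0 := by positivity
  rw [sproj, sprojInv_re, sprojInv_im, div_sub_one ht]
  field_simp
  ring

lemma sprojInv_sproj {z : Circle} (hz : z ≠ 1) : sprojInv (sproj z) = z := by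
  have hsq := Circle.re_sq_add_im_sq z
  have hne := Circle.re_sub_one_ne_zero hz
  have hden : sproj z ^ 2 + 1 ≠ 0 := by positivity
  apply Circle.ext
  apply Complex.ext
  · rw [sprojInv_re, div_eq_iff hden, sproj]
    field_simp
    linear_combination (1 - (z : ℂ).re) * hsq
  · rw [sprojInv_im, div_eq_iff hden, sproj]
    field_simp
    linear_combination (-(z : ℂ).im) * hsq

lemma continuousOn_sproj : ContinuousOn sproj {z | z ≠ 1} :=
  ContinuousOn.div (by fun_prop) (by fun_prop) fun _ hz => Circle.re_sub_one_ne_zero hz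

lemma isOpen_setOf_ne_and_sproj_mem (u : Circle) {s : Set ℝ} (hs : IsOpen s) :
    IsOpen {p | p ≠ u ∧ sproj (u⁻¹ * p) ∈ s} := by
  have hcont : ContinuousOn (fun p => sproj (u⁻¹ * p)) {p | p ≠ u} :=
    continuousOn_sproj.comp (by fun_prop) fun p hp => by simpa [inv_mul_eq_one, eq_comm] using hp
  exact hcont.isOpen_inter_preimage isOpen_ne hs

lemma oInt_eq (u : Circle) {v : Circle} (huv : u ≠ v) :
    oInt u v = {p | p ≠ u ∧ sproj (u⁻¹ * p) ∈ Iio (sproj (u⁻¹ * v))} := by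
  ext p
  refine ⟨fun ⟨hup, _, _, hlt⟩ => ⟨hup.symm, hlt⟩, fun ⟨hpu, hlt⟩ => ⟨hpu.symm, ?_, huv.symm, hlt⟩⟩
  rintro rfl
  exact lt_irrefl _ (mem_Iio.mp hlt)

lemma sproj_inv_mul_mul_sprojInv (u : Circle) (t : ℝ) : sproj (u⁻¹ * (u * sprojInv t)) = t := by
  rw [inv_mul_cancel_left, sproj_sprojInv]

lemma mul_sprojInv_ne (u : Circle) (t : ℝ) : u * sprojInv t ≠ u := by
  simpa using sprojInv_ne_one t

lemma mem_closure_setOf_ne_and_sproj_gt {u p : Circle} {c : ℝ}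
    (hp : p = u ∨ c ≤ sproj (u⁻¹ * p)) : p ∈ closure {q | q ≠ u ∧ c < sproj (u⁻¹ * q)} := by
  have hmem : ∀ t, c < t → u * sprojInv t ∈ {q | q ≠ u ∧ c < sproj (u⁻¹ * q)} := fun t ht =>
    ⟨mul_sprojInv_ne u t, by rwa [sproj_inv_mul_mul_sprojInv]⟩
  rcases eq_or_ne p u with rfl | hpu
  · have hlim : Tendsto (fun t => p * sprojInv t) atTop (𝓝 p) := by
      simpa using tendsto_sprojInv_atTop.const_mul p
    exact mem_closure_of_tendsto hlim ((eventually_gt_atTop c).mono hmem)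
  · have hs : u * sprojInv (sproj (u⁻¹ * p)) = p := by
      rw [sprojInv_sproj (by simpa [inv_mul_eq_one, eq_comm] using hpu), mul_inv_cancel_left]
    have hlim : Tendsto (fun t => u * sprojInv t) (𝓝[>] (sproj (u⁻¹ * p))) (𝓝 p) := by
      have h := (continuous_sprojInv.const_mul u).tendsto (sproj (u⁻¹ * p))
      rw [hs] at h
      exact h.mono_left nhdsWithin_le_nhds
    refine mem_closure_of_tendsto hlim ?_
    filter_upwards [self_mem_nhdsWithin] with t ht
    exact hmem t ((hp.resolve_left hpu).trans_lt ht)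

lemma IsND.isOpen {I : Set Circle} (hI : IsND I) : IsOpen I := by
  obtain ⟨u, v, huv, rfl⟩ := hI
  rw [oInt_eq u huv]
  exact isOpen_setOf_ne_and_sproj_mem u isOpen_Iio

lemma IsND.nonempty {I : Set Circle} (hI : IsND I) : I.Nonempty := by
  obtain ⟨u, v, huv, rfl⟩ := hI
  rw [oInt_eq u huv]
  refine ⟨u * sprojInv (sproj (u⁻¹ * v) - 1), mul_sprojInv_ne u _, ?_⟩
  rw [mem_Iio, sproj_inv_mul_mul_sprojInv]
  linarith

lemma IsND.interior_closure {I : Set Circle} (hI : IsND I) : interior (closure I) = I := by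
  refine (interior_maximal subset_closure hI.isOpen).antisymm' fun p hp => ?_
  obtain ⟨u, v, huv, rfl⟩ := hI
  set D := {q | q ≠ u ∧ sproj (u⁻¹ * v) < sproj (u⁻¹ * q)}
  have hD : IsOpen D := isOpen_setOf_ne_and_sproj_mem u isOpen_Ioi
  have hdisj : Disjoint D (closure (oInt u v)) := by
    refine Disjoint.closure_right ?_ hD
    rw [oInt_eq u huv]
    exact disjoint_left.2 fun q hqD hqI => (mem_Iio.1 hqI.2).not_gt hqD.2
  by_contra hpI
  rw [oInt_eq u huv, mem_ofPred_eq, not_and_or, not_not, mem_Iio, not_lt] at hpI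
  obtain ⟨q, hq, hqD⟩ :=
    mem_closure_iff.1 (mem_closure_setOf_ne_and_sproj_gt hpI) _ isOpen_interior hp
  exact disjoint_left.1 hdisj hqD (interior_subset hq)

lemma dual_anti {I J : Set Circle} (h : I ⊆ J) : dual J ⊆ dual I :=
  interior_mono (compl_subset_compl.2 h)

lemma IsND.dual_dual {I : Set Circle} (hI : IsND I) : dual (dual I) = I := by
  rw [dual, dual, ← closure_eq_compl_interior_compl, hI.interior_closure]

lemma dual_subset_comm {I J : Set Circle} (hI : IsND I) (hJ : IsND J) :
    dual I ⊆ J ↔ dual J ⊆ I :=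
  ⟨fun h => hI.dual_dual ▸ dual_anti h, fun h => hJ.dual_dual ▸ dual_anti h⟩

lemma subset_dual_of_disjoint {I J : Set Circle} (hJ : IsOpen J) (h : Disjoint J I) :
    J ⊆ dual I :=
  interior_maximal (subset_compl_iff_disjoint_right.2 h) hJ

end

namespace IsGap

variable {L G G' : Set (Set Circle)}

lemma eq_of_subset (hL : LamSys L) (hG : IsGap L G) {I J : Set Circle} (hI : I ∈ G)
    (hJ : J ∈ G) (h : I ⊆ J) : I = J := by
  by_contra hne
  obtain ⟨x, hx⟩ := (hL.nd I (hG.1 hI)).nonempty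
  exact (eq_empty_iff_forall_notMem.1 (hG.2.1 I hI J hJ hne)) x ⟨hx, h hx⟩

lemma liesOn_of_dual_subset (hL : LamSys L) (hG : IsGap L G) {I K : Set Circle} (hI : I ∈ G)
    (h : dual I ⊆ K) : ∀ J ∈ G, LiesOn J K := by
  intro J hJ
  by_cases hJI : J = I
  · exact hJI ▸ Or.inr h
  · have hdisj : Disjoint J I := disjoint_iff_inter_eq_empty.2 (hG.2.1 J hJ I hI hJI)
    exact Or.inl ((subset_dual_of_disjoint (hL.nd J (hG.1 hJ)).isOpen hdisj).trans h)

lemma subset_of_forall_not_dual_subset (hL : LamSys L) (hG : IsGap L G) (hG' : IsGap L G')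
    (h : ∀ I ∈ G, ∀ I' ∈ G', ¬ dual I ⊆ I') : G ⊆ G' := by
  intro I hI
  have hIL := hG.1 hI
  obtain ⟨I', hI', hII'⟩ : ∃ I' ∈ G', I ⊆ I' := by
    obtain ⟨I', hI', hlies | hlies⟩ := hG'.2.2 (dual I) (hL.dualMem I hIL)
    · exact (h I hI I' hI' hlies).elim
    · exact ⟨I', hI', (hL.nd I hIL).dual_dual ▸ hlies⟩
  obtain ⟨J, hJ, hI'J⟩ : ∃ J ∈ G, I' ⊆ J := by
    obtain ⟨J, hJ, hlies | hlies⟩ := hG.2.2 I' (hG'.1 hI')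
    · exact ⟨J, hJ, hlies⟩
    · have := (dual_subset_comm (hL.nd I' (hG'.1 hI')) (hL.nd J (hG.1 hJ))).1 hlies
      exact (h J hJ I' hI' this).elim
  have hIJ : I = J := hG.eq_of_subset hL hI hJ (hII'.trans hI'J)
  rwa [hII'.antisymm (hIJ ▸ hI'J)]

end IsGap

theorem stmt10_general (L : Set (Set Circle)) (hL : LamSys L) (G G' : Set (Set Circle))
    (hG : IsGap L G) (hG' : IsGap L G') :
    G = G' ∨ ∃ I ∈ G, ∃ I' ∈ G', dual I ⊆ I' ∧
      (∀ J ∈ G, LiesOn J I') ∧ (∀ J' ∈ G', LiesOn J' I) := by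
  have hcomm : ∀ {I I'}, I ∈ G → I' ∈ G' → (dual I ⊆ I' ↔ dual I' ⊆ I) := fun hI hI' =>
    dual_subset_comm (hL.nd _ (hG.1 hI)) (hL.nd _ (hG'.1 hI'))
  by_cases hdual : ∃ I ∈ G, ∃ I' ∈ G', dual I ⊆ I'
  · obtain ⟨I, hI, I', hI', hsub⟩ := hdual
    exact Or.inr ⟨I, hI, I', hI', hsub, hG.liesOn_of_dual_subset hL hI hsub,
      hG'.liesOn_of_dual_subset hL hI' ((hcomm hI hI').1 hsub)⟩
  · push Not at hdual
    have hdual' : ∀ I' ∈ G', ∀ I ∈ G, ¬ dual I' ⊆ I := fun I' hI' I hI hsub =>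
      hdual I hI I' hI' ((hcomm hI hI').2 hsub)
    exact Or.inl ((hG.subset_of_forall_not_dual_subset hL hG' hdual).antisymm
      (hG'.subset_of_forall_not_dual_subset hL hG hdual'))

/-- Two gaps with at least two elements either coincide, or are "unlinked" via a pair of
intervals `I ∈ G`, `I' ∈ G'` with `I* ⊆ I'`. -/
theorem stmt10 (L : Set (Set Circle)) (hL : LamSys L) (G G' : Set (Set Circle))
    (hG : IsGap L G) (hG' : IsGap L G') (h2 : G.Nontrivial) (h2' : G'.Nontrivial) :
    G = G' ∨ ∃ I ∈ G, ∃ I' ∈ G', dual I ⊆ I' ∧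
      (∀ J ∈ G, LiesOn J I') ∧ (∀ J' ∈ G', LiesOn J' I) :=
  stmt10_general L hL G G' hG hG'
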